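/- arXiv:1606.08333 — 2 statements merged into one kernel-verified Lean document; each statement's English description precedes it below -/
import Mathlib

section
/- There are believable σ-satisfiable formulas on the class KD45 for every infinite binary string σ: for every function σ : ℕ⁺ → {0,1} there exist a formula ψ in the two-agent language (agents a and b) and a pointed KD45 model (N,s) such that for every n ≥ 0, N|ψ^n, s ⊨ σ_{n+1}(ψ) and N|ψ^n, s ⊨ ◇_a ψ ∧ ◇_b ψ (so the announced formula is believable for both agents at every stage of the iteration). -/
inductive Form (A : Type) : Type
  | atom : ℕ → Form A
  | neg  : Form A → Form A
  | conj : Form A → Form A → Form A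
  | box  : A → Form A → Form A
  | ann  : Form A → Form A → Form A
  deriving DecidableEq

namespace Form

/-- ◇_a φ := ¬□_a¬φ -/
def dia {A : Type} (a : A) (φ : Form A) : Form A := .neg (.box a (.neg φ))

/-- φ → ψ := ¬(φ ∧ ¬ψ) -/
def imp {A : Type} (φ ψ : Form A) : Form A := .neg (.conj φ (.neg ψ))

/-- φ ∨ ψ := ¬(¬φ ∧ ¬ψ) -/
def or {A : Type} (φ ψ : Form A) : Form A := .neg (.conj (.neg φ) (.neg ψ))

/-- ⊥ := p ∧ ¬p -/
def bot {A : Type} : Form A := .conj (.atom 0) (.neg (.atom 0))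

def top {A : Type} : Form A := .neg bot

def iff {A : Type} (φ ψ : Form A) : Form A := .conj (imp φ ψ) (imp ψ φ)

end Form

/-- A Kripke model over agents `A` with state set `S`. -/
structure Model (A S : Type) where
  R : A → S → S → Prop
  V : ℕ → S → Prop

/-- Arrow elimination: keep only arrows pointing to states satisfying `P`. -/
def Model.restrict {A S : Type} (M : Model A S) (P : S → Prop) : Model A S :=
  ⟨fun a s t => M.R a s t ∧ P t, M.V⟩

/-- Satisfaction, with believed announcements interpreted by arrow elimination. -/
def Sat {A S : Type} : Model A S → Form A → S → Prop
  | M, .atom n, s => M.V n s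
  | M, .neg φ, s => ¬ Sat M φ s
  | M, .conj φ ψ, s => Sat M φ s ∧ Sat M ψ s
  | M, .box a φ, s => ∀ t : S, M.R a s t → Sat M φ t
  | M, .ann φ ψ, s => Sat (M.restrict (fun t => Sat M φ t)) ψ s

/-- K45: every accessibility relation is transitive and euclidean. -/
def isK45 {A S : Type} (M : Model A S) : Prop :=
  ∀ a : A, (∀ x y z : S, M.R a x y → M.R a y z → M.R a x z) ∧
    (∀ x y z : S, M.R a x y → M.R a x z → M.R a y z)

/-- KD45: every accessibility relation is transitive, euclidean and serial. -/
def isKD45 {A S : Type} (M : Model A S) : Prop :=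
  ∀ a : A, (∀ x y z : S, M.R a x y → M.R a y z → M.R a x z) ∧
    (∀ x y z : S, M.R a x y → M.R a x z → M.R a y z) ∧
    (∀ x : S, ∃ y : S, M.R a x y)

/-- Iterated announcement: M|φ^0 = M and M|φ^{n+1} = (M|φ^n)|φ. -/
def updIter {A S : Type} (M : Model A S) (φ : Form A) : ℕ → Model A S
  | 0 => M
  | n + 1 => (updIter M φ n).restrict (fun t => Sat (updIter M φ n) φ t)

/-!
For each `k` the model has a chain `chain k 0, …, chain k k` whose consecutive links are joined
alternately by `b` and `a`, and a probe `probe k` joined to `chain k 0` by `a`. A link satisfies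
`ψ` iff it still has a successor, so each announcement of `ψ` cuts the arrows into the last link
of every chain, and `chain k 0` becomes a last link exactly at stage `k`, which `probe k` detects.
The actual state sees every probe through `b` and satisfies `ψ` iff the probe firing now carries
the atom recording `σ k`; the state `safe` satisfies `ψ` forever and is seen by both agents.
-/

section Semantics

variable {A S : Type} (M : Model A S)

@[simp] lemma sat_atom (i : ℕ) (x : S) : Sat M (.atom i) x ↔ M.V i x := Iff.rfl

@[simp] lemma sat_neg (φ : Form A) (x : S) : Sat M (.neg φ) x ↔ ¬ Sat M φ x := Iff.rfl

@[simp] lemma sat_conj (φ χ : Form A) (x : S) :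
    Sat M (.conj φ χ) x ↔ Sat M φ x ∧ Sat M χ x := Iff.rfl

@[simp] lemma sat_or (φ χ : Form A) (x : S) :
    Sat M (Form.or φ χ) x ↔ Sat M φ x ∨ Sat M χ x := by
  simp only [Form.or, sat_neg, sat_conj]; tauto

@[simp] lemma sat_imp (φ χ : Form A) (x : S) :
    Sat M (Form.imp φ χ) x ↔ (Sat M φ x → Sat M χ x) := by
  simp only [Form.imp, sat_neg, sat_conj]; tauto

@[simp] lemma sat_dia (a : A) (φ : Form A) (x : S) :
    Sat M (Form.dia a φ) x ↔ ∃ t, M.R a x t ∧ Sat M φ t := by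
  simp [Form.dia, Sat]

end Semantics

namespace Model

variable {A S β : Type}

@[simps]
def ofPartition (cell : A → S → β) (T : S → Prop) (V : ℕ → S → Prop) : Model A S :=
  ⟨fun a x y => cell a x = cell a y ∧ T y, V⟩

variable (cell : A → S → β) (V : ℕ → S → Prop)

lemma ofPartition_restrict (T P : S → Prop) :
    (ofPartition cell T V).restrict P = ofPartition cell (fun y => T y ∧ P y) V := by
  simp only [ofPartition, restrict, and_assoc]

lemma isKD45_ofPartition (T : S → Prop) (h : ∀ a x, ∃ y, cell a x = cell a y ∧ T y) :
    isKD45 (ofPartition cell T V) := fun a =>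
  ⟨fun _ _ _ hxy hyz => ⟨hxy.1.trans hyz.1, hyz.2⟩,
    fun _ _ _ hxy hxz => ⟨hxy.1.symm.trans hxz.1, hxz.2⟩, h a⟩

lemma updIter_ofPartition (φ : Form A) (T : ℕ → S → Prop)
    (hT : ∀ n y, T (n + 1) y ↔ T n y ∧ Sat (ofPartition cell (T n) V) φ y) (n : ℕ) :
    updIter (ofPartition cell (T 0) V) φ n = ofPartition cell (T n) V := by
  induction n with
  | zero => rfl
  | succ n ih =>
    rw [updIter, ih, ofPartition_restrict]
    congr
    funext y
    exact propext (hT n y).symm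

end Model

namespace SigmaModel

inductive State where
  | actual : State
  | safe : State
  | probe : ℕ → State
  | chain : ℕ → ℕ → State

open State

/-- The states `chain k h` with `h > k` are spare: they carry no `mark`, so chain `k` ends at
`chain k k`. -/
def cell : Bool → State → Option (ℕ × ℕ)
  | true, probe k => some (k, 0)
  | true, chain k h => some (k, (h + 1) / 2)
  | false, chain k h => some (k, h / 2)
  | _, _ => none

def val (σ : ℕ → Bool) : ℕ → State → Prop
  | 0, chain k h => h ≤ k ∧ h % 2 = 0
  | 1, chain k h => h ≤ k ∧ h % 2 = 1
  | 2, probe k => σ k = true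
  | 3, actual => True
  | _, _ => False

/-- The states still possible after `n` announcements. -/
def Alive (n : ℕ) : State → Prop
  | actual => False
  | chain k h => h ≤ k → h + n ≤ k
  | _ => True

abbrev model (σ : ℕ → Bool) (n : ℕ) : Model Bool State :=
  Model.ofPartition cell (Alive n) (val σ)

def mark (i : ℕ) : Form Bool := .atom i
def probeAtom : Form Bool := .atom 2
def actualAtom : Form Bool := .atom 3

def onChain : Form Bool := Form.or (mark 0) (mark 1)
def lastEven : Form Bool := .conj (mark 0) (.neg (Form.dia false (mark 1)))
def lastOdd : Form Bool := .conj (mark 1) (.neg (Form.dia true (mark 0)))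
def fires : Form Bool := Form.dia true lastEven
def senses : Form Bool := Form.dia false (.conj probeAtom fires)

def ψ : Form Bool :=
  Form.or (.conj onChain (.neg (Form.or lastEven lastOdd)))
    (.conj (.neg onChain) (Form.imp actualAtom senses))

variable {σ : ℕ → Bool} {n : ℕ}

lemma sat_dia_mark_one_chain {k h : ℕ} (he : h % 2 = 0) :
    Sat (model σ n) (Form.dia false (mark 1)) (chain k h) ↔ h + 1 + n ≤ k := by
  simp only [sat_dia, mark, sat_atom]
  constructor
  · rintro ⟨t, ⟨hc, ht⟩, hm⟩
    cases t with
    | chain k' h' =>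
      simp only [model, Model.ofPartition_V, cell, val, Alive,
        Option.some.injEq, Prod.mk.injEq] at hc ht hm
      omega
    | _ => simp [val] at hm
  · intro hk
    exact ⟨chain k (h + 1), ⟨by simp [cell]; omega, fun _ => by omega⟩, by simp [val]; omega⟩

lemma sat_dia_mark_zero_chain {k h : ℕ} (ho : h % 2 = 1) :
    Sat (model σ n) (Form.dia true (mark 0)) (chain k h) ↔ h + 1 + n ≤ k := by
  simp only [sat_dia, mark, sat_atom]
  constructor
  · rintro ⟨t, ⟨hc, ht⟩, hm⟩
    cases t with
    | chain k' h' =>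
      simp only [model, Model.ofPartition_V, cell, val, Alive,
        Option.some.injEq, Prod.mk.injEq] at hc ht hm
      omega
    | _ => simp [val] at hm
  · intro hk
    exact ⟨chain k (h + 1), ⟨by simp [cell]; omega, fun _ => by omega⟩, by simp [val]; omega⟩

lemma sat_ψ_chain (k h : ℕ) : Sat (model σ n) ψ (chain k h) ↔ Alive (n + 1) (chain k h) := by
  simp only [ψ, onChain, lastEven, lastOdd, sat_or, sat_conj, sat_neg]
  rcases Nat.mod_two_eq_zero_or_one h with he | ho
  · rw [sat_dia_mark_one_chain he]
    simp [mark, actualAtom, val, Alive, he]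
    omega
  · rw [sat_dia_mark_zero_chain ho]
    simp [mark, actualAtom, val, Alive, ho]
    omega

lemma sat_ψ_safe : Sat (model σ n) ψ safe := by
  simp [ψ, onChain, mark, actualAtom, val]

lemma sat_ψ_probe (k : ℕ) : Sat (model σ n) ψ (probe k) := by
  simp [ψ, onChain, mark, actualAtom, val]

lemma sat_fires_probe (j : ℕ) : Sat (model σ n) fires (probe j) ↔ j = n := by
  simp only [fires, lastEven, sat_dia, sat_conj, sat_neg]
  constructor
  · rintro ⟨t, ⟨hc, ht⟩, hm, hlast⟩
    cases t with
    | chain k h =>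
      simp only [cell, Option.some.injEq, Prod.mk.injEq] at hc
      obtain ⟨rfl, hh⟩ := hc
      obtain rfl : h = 0 := by omega
      rw [← sat_dia, sat_dia_mark_one_chain rfl] at hlast
      simp only [Alive] at ht
      omega
    | _ => simp [mark, val] at hm
  · rintro rfl
    refine ⟨chain j 0, ⟨rfl, fun _ => by omega⟩, by simp [mark, val], ?_⟩
    rw [← sat_dia, sat_dia_mark_one_chain rfl]
    omega

lemma sat_ψ_actual : Sat (model σ n) ψ actual ↔ σ n = true := by
  simp only [ψ, senses, sat_or, sat_conj, sat_neg, sat_imp, sat_dia]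
  simp only [onChain, mark, actualAtom, sat_or, sat_atom, model, Model.ofPartition_V, val,
    or_self, not_false_eq_true, false_and, true_and, false_or, forall_const]
  constructor
  · rintro ⟨t, -, hp, hf⟩
    cases t with
    | probe j =>
      rw [sat_fires_probe] at hf
      exact hf ▸ hp
    | _ => simp [probeAtom, val] at hp
  · intro hσ
    exact ⟨probe n, ⟨rfl, trivial⟩, hσ, (sat_fires_probe n).2 rfl⟩

lemma alive_succ (x : State) : Alive (n + 1) x ↔ Alive n x ∧ Sat (model σ n) ψ x := by
  cases x with
  | actual => simp [Alive]
  | chain k h =>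
    rw [sat_ψ_chain]
    simp only [Alive]
    omega
  | safe => simpa [Alive] using sat_ψ_safe
  | probe k => simpa [Alive] using sat_ψ_probe k

lemma updIter_model : updIter (model σ 0) ψ n = model σ n :=
  Model.updIter_ofPartition _ _ _ Alive (fun _ => alive_succ) n

lemma isKD45_model : isKD45 (model σ 0) := by
  refine Model.isKD45_ofPartition _ _ _ fun a x => ?_
  cases x with
  | actual => exact ⟨safe, by cases a <;> rfl, trivial⟩
  | _ => exact ⟨_, rfl, by simp [Alive]⟩

end SigmaModel

/-- There are believable σ-satisfiable formulas on KD45 for every infinite binary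
string σ (σ n encodes σ_{n+1}, with true = 1): there are a two-agent formula ψ
(agents are the two elements of Bool) and a pointed KD45 model (N,s) such that
for every n, N|ψ^n, s ⊨ σ_{n+1}(ψ) and N|ψ^n, s ⊨ ◇_a ψ ∧ ◇_b ψ. -/
theorem believable_sigma_satisfiable_on_KD45 (σ : ℕ → Bool) :
    ∃ (ψ : Form Bool) (S : Type) (N : Model Bool S) (s : S),
      isKD45 N ∧
      ∀ n : ℕ,
        Sat (updIter N ψ n) (if σ n then ψ else Form.neg ψ) s ∧
        Sat (updIter N ψ n) (Form.conj (Form.dia true ψ) (Form.dia false ψ)) s := by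
  refine ⟨SigmaModel.ψ, _, SigmaModel.model σ 0, .actual, SigmaModel.isKD45_model, fun n => ?_⟩
  rw [SigmaModel.updIter_model]
  have hsafe := SigmaModel.sat_ψ_safe (σ := σ) (n := n)
  refine ⟨?_, ?_, ?_⟩
  · cases hσ : σ n <;> simp [SigmaModel.sat_ψ_actual, hσ]
  all_goals exact (sat_dia _ _ _ _).2 ⟨.safe, ⟨rfl, trivial⟩, hsafe⟩
end

section
/- The single-agent formula p ∨ □p is a true lie on K45: the formula ¬(p ∨ □p) → [p ∨ □p](p ∨ □p) is valid on the class K45 of Kripke models with a transitive and euclidean accessibility relation. -/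
namespace Sat

variable {A S : Type} {M : Model A S} {s : S}

@[simp] theorem imp_iff {φ ψ : Form A} : Sat M (φ.imp ψ) s ↔ (Sat M φ s → Sat M ψ s) := by
  simp only [Form.imp, Sat, not_and, not_not]

@[simp] theorem or_iff {φ ψ : Form A} : Sat M (φ.or ψ) s ↔ Sat M φ s ∨ Sat M ψ s := by
  simp only [Form.or, Sat, not_and, not_not]
  tauto

@[simp] theorem restrict_atom_iff {P : S → Prop} {n : ℕ} :
    Sat (M.restrict P) (.atom n) s ↔ Sat M (.atom n) s :=
  Iff.rfl

theorem box_of_rel_of_box {a : A} {φ : Form A} {t : S}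
    (heucl : ∀ x y z : S, M.R a x y → M.R a x z → M.R a y z)
    (hst : M.R a s t) (ht : Sat M (.box a φ) t) : Sat M (.box a φ) s :=
  fun u hsu => ht u (heucl s t u hst hsu)

/-- If `p ∨ □p` is false, every successor where it is true satisfies `p` (its `□p` disjunct would
make `□p` true here), so after the announcement `□p`, hence `p ∨ □p`, holds. -/
theorem atom_or_box_true_lie {a : A} {n : ℕ}
    (heucl : ∀ x y z : S, M.R a x y → M.R a x z → M.R a y z) :
    Sat M ((Form.neg ((Form.atom n).or (.box a (.atom n)))).imp
      (.ann ((Form.atom n).or (.box a (.atom n))) ((Form.atom n).or (.box a (.atom n))))) s := by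
  rw [imp_iff, Sat, or_iff, not_or]
  rintro ⟨-, hnbox⟩
  refine or_iff.2 (Or.inr fun t ⟨hst, hφt⟩ => ?_)
  rw [restrict_atom_iff]
  exact (or_iff.1 hφt).resolve_right fun hbox => hnbox (box_of_rel_of_box heucl hst hbox)

end Sat

/-- p ∨ □p is a true lie on K45: ¬(p ∨ □p) → [p ∨ □p](p ∨ □p) is valid on K45. -/
theorem p_or_box_p_is_true_lie_on_K45 :
    ∀ (S : Type) (M : Model Unit S) (s : S), isK45 M →
      Sat M (Form.imp (Form.neg (Form.or (Form.atom 0) (Form.box () (Form.atom 0))))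
        (Form.ann (Form.or (Form.atom 0) (Form.box () (Form.atom 0)))
          (Form.or (Form.atom 0) (Form.box () (Form.atom 0))))) s :=
  fun _ _ _ hK => Sat.atom_or_box_true_lie (hK ()).2
end
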